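/- arXiv:0805.3148 — 11 statements merged into one kernel-verified Lean document; each statement's English description precedes it below -/
import Mathlib

section
/- For every integer m ≥ 1, the finite trigonometric sum ∑_{j=1}^{m-1} 1/sin²(jπ/m) equals (m² - 1)/3. -/
/-!
With `x = exp (2 i θ)` one has `(1 - x)² = -4 sin² θ · x`. The coefficients `k (m - k)` have
constant second difference `-2`, so for an `m`-th root of unity `x ≠ 1` (where
`∑_{k<m} x^k = 0`) we get `(1 - x)² ∑_{k<m} k (m - k) x^k = 2 m x`. Hence, with `ζ = exp (2πi/m)`,
`1 / sin² (jπ/m) = -(2/m) ∑_{k<m} k (m - k) ζ^{jk}` for `0 < j < m`. Summing over `j`, each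
`∑_{0<j<m} ζ^{jk}` with `0 < k < m` equals `-1`, leaving `(2/m) ∑_{k<m} k (m - k) = (m² - 1)/3`.
-/

open Real Finset

section GeomSum

variable {R : Type*} [CommRing R]

theorem sum_range_succ_natCast_mul_sub_mul (f : ℕ → R) (n : ℕ) :
    ∑ k ∈ range (n + 1), (k : R) * ((n + 1 : ℕ) - k) * f k
      = ∑ k ∈ range n, (k : R) * (n - k) * f k + ∑ k ∈ range (n + 1), (k : R) * f k := by
  rw [sum_range_succ, sum_range_succ, ← add_assoc, ← sum_add_distrib]
  push_cast
  congr 1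
  · exact sum_congr rfl fun k _ ↦ by ring
  · ring

theorem six_mul_sum_range_natCast_mul_sub (n : ℕ) :
    6 * ∑ k ∈ range n, (k : R) * (n - k) = n * (n ^ 2 - 1) := by
  induction n with
  | zero => simp
  | succ n ih =>
    have hgauss : (∑ k ∈ range (n + 1), (k : R)) * 2 = (n + 1) * n := by
      have h := congrArg (Nat.cast : ℕ → R) (sum_range_id_mul_two (n + 1))
      push_cast at h
      simpa using h
    have hsplit := sum_range_succ_natCast_mul_sub_mul (fun _ ↦ (1 : R)) n
    simp only [mul_one] at hsplit
    rw [hsplit]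
    push_cast
    linear_combination ih + 3 * hgauss

theorem one_sub_mul_sum_range_natCast_mul_pow (x : R) (n : ℕ) :
    (1 - x) * ∑ k ∈ range n, (k : R) * x ^ k = x * ∑ k ∈ range n, x ^ k - n * x ^ n := by
  induction n with
  | zero => simp
  | succ n ih =>
    rw [sum_range_succ, sum_range_succ, mul_add, ih]
    push_cast
    ring

theorem one_sub_sq_mul_sum_range_natCast_mul_sub_mul_pow (x : R) (n : ℕ) :
    (1 - x) ^ 2 * ∑ k ∈ range n, (k : R) * (n - k) * x ^ k
      = x * (n * (1 + x ^ n) - (1 + x) * ∑ k ∈ range n, x ^ k) := by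
  induction n with
  | zero => simp
  | succ n ih =>
    rw [sum_range_succ_natCast_mul_sub_mul, mul_add, ih, sq, mul_assoc,
      one_sub_mul_sum_range_natCast_mul_pow, sum_range_succ]
    push_cast
    linear_combination x * mul_neg_geom_sum x n

theorem one_sub_sq_mul_sum_range_natCast_mul_sub_mul_pow_of_geom_sum_eq_zero {x : R} {n : ℕ}
    (hx : ∑ k ∈ range n, x ^ k = 0) :
    (1 - x) ^ 2 * ∑ k ∈ range n, (k : R) * (n - k) * x ^ k = 2 * n * x := by
  have hxn : x ^ n = 1 := by linear_combination mul_neg_geom_sum x n - (1 - x) * hx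
  rw [one_sub_sq_mul_sum_range_natCast_mul_sub_mul_pow, hx, hxn]
  ring

end GeomSum

section PrimitiveRoot

variable {R : Type*} [CommRing R] [NoZeroDivisors R] {ζ : R} {n j : ℕ}

theorem IsPrimitiveRoot.geom_sum_pow_eq_zero (hζ : IsPrimitiveRoot ζ n) (hj : ¬n ∣ j) :
    ∑ i ∈ range n, (ζ ^ j) ^ i = 0 := by
  have hne : (1 : R) - ζ ^ j ≠ 0 :=
    sub_ne_zero_of_ne fun h ↦ hj ((hζ.pow_eq_one_iff_dvd j).mp h.symm)
  refine eq_zero_of_ne_zero_of_mul_left_eq_zero hne ?_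
  rw [mul_neg_geom_sum, ← pow_mul, mul_comm, pow_mul, hζ.pow_eq_one, one_pow, sub_self]

theorem IsPrimitiveRoot.sum_Ico_one_pow_eq_neg_one (hζ : IsPrimitiveRoot ζ n) (hj0 : 0 < j)
    (hjn : j < n) : ∑ i ∈ Ico 1 n, (ζ ^ j) ^ i = -1 := by
  have hgeom := hζ.geom_sum_pow_eq_zero (Nat.not_dvd_of_pos_of_lt hj0 hjn)
  rw [sum_range_eq_add_Ico _ (hj0.trans hjn), pow_zero] at hgeom
  exact eq_neg_of_add_eq_zero_right hgeom

end PrimitiveRoot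

namespace Complex

theorem one_sub_exp_two_mul_mul_I_sq (z : ℂ) :
    (1 - exp (2 * z * I)) ^ 2 = -4 * sin z ^ 2 * exp (2 * z * I) := by
  have hexp : exp (2 * z * I) = exp (z * I) ^ 2 := by rw [← exp_nat_mul]; ring_nf
  have hsub : 1 - exp (2 * z * I) = -2 * I * sin z * exp (z * I) := by
    rw [exp_mul_I, exp_mul_I, cos_two_mul, sin_two_mul]
    linear_combination -2 * sin_sq_add_cos_sq z + 2 * sin z ^ 2 * I_sq
  rw [hsub, hexp]
  linear_combination 4 * sin z ^ 2 * exp (z * I) ^ 2 * I_sq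

theorem one_div_sin_sq_eq_of_geom_sum_eq_zero {z : ℂ} {n : ℕ} (hn : n ≠ 0)
    (hz : ∑ k ∈ range n, exp (2 * z * I) ^ k = 0) :
    1 / sin z ^ 2 = -2 / n * ∑ k ∈ range n, (k : ℂ) * (n - k) * exp (2 * z * I) ^ k := by
  have key := one_sub_sq_mul_sum_range_natCast_mul_sub_mul_pow_of_geom_sum_eq_zero hz
  rw [one_sub_exp_two_mul_mul_I_sq] at key
  have key' : -4 * sin z ^ 2 * ∑ k ∈ range n, (k : ℂ) * (n - k) * exp (2 * z * I) ^ k = 2 * n :=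
    mul_right_cancel₀ (exp_ne_zero (2 * z * I)) (by linear_combination key)
  have hn' : (n : ℂ) ≠ 0 := Nat.cast_ne_zero.mpr hn
  have hsin : sin z ≠ 0 := by
    rintro h
    simp [h, hn] at key'
  field_simp
  linear_combination -key' / 2

theorem one_div_sin_sq_nat_mul_pi_div {m j : ℕ} (hj0 : 0 < j) (hjm : j < m) :
    1 / sin (j * π / m) ^ 2
      = -2 / m * ∑ k ∈ range m, (k : ℂ) * (m - k) * (exp (2 * π * I / m) ^ k) ^ j := by
  have hζ := isPrimitiveRoot_exp m (hj0.trans hjm).ne'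
  have hexp : exp (2 * (j * π / m) * I) = exp (2 * π * I / m) ^ j := by
    rw [← exp_nat_mul]
    ring_nf
  have hgeom := hζ.geom_sum_pow_eq_zero (Nat.not_dvd_of_pos_of_lt hj0 hjm)
  rw [← hexp] at hgeom
  rw [one_div_sin_sq_eq_of_geom_sum_eq_zero (hj0.trans hjm).ne' hgeom, hexp]
  simp only [pow_right_comm _ j]

end Complex

/-- Lemma 4.3: for every integer `m ≥ 1`,
`∑_{j=1}^{m-1} 1 / sin²(jπ/m) = (m² - 1) / 3`. -/
theorem sum_one_div_sin_sq (m : ℕ) (hm : 1 ≤ m) :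
    ∑ j ∈ Finset.Ico 1 m, 1 / (Real.sin (j * Real.pi / m)) ^ 2
      = ((m : ℝ) ^ 2 - 1) / 3 := by
  set ζ := Complex.exp (2 * π * Complex.I / m)
  have hζ : IsPrimitiveRoot ζ m := Complex.isPrimitiveRoot_exp m (by omega)
  have hinner : ∀ k ∈ range m, ∑ j ∈ Ico 1 m, (k : ℂ) * (m - k) * (ζ ^ k) ^ j
      = -((k : ℂ) * (m - k)) := by
    intro k hk
    rcases Nat.eq_zero_or_pos k with rfl | hk0
    · simp
    rw [← mul_sum, hζ.sum_Ico_one_pow_eq_neg_one hk0 (mem_range.mp hk), mul_neg_one]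
  apply Complex.ofReal_injective
  push_cast
  rw [sum_congr rfl fun j hj ↦ Complex.one_div_sin_sq_nat_mul_pi_div (mem_Ico.mp hj).1
      (mem_Ico.mp hj).2, ← mul_sum, sum_comm, sum_congr rfl hinner, sum_neg_distrib]
  have hm0 : (m : ℂ) ≠ 0 := by exact_mod_cast (by omega : m ≠ 0)
  field_simp
  linear_combination six_mul_sum_range_natCast_mul_sub (R := ℂ) m
end

section
/- For every integer m ≥ 1, the finite trigonometric sum ∑_{j=1}^{m-1} 1/sin⁴(jπ/m) equals (m⁴ + 10m² - 11)/45. -/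
/-!
The numbers `cos (jπ/m)`, `1 ≤ j < m`, are the roots of the Chebyshev polynomial `U_{m-1}`, so the
logarithmic derivatives of `U_{m-1}` at `1` give `∑ 1/(1 - cos)` and `∑ 1/(1 - cos)²` in terms of
`U_{m-1}(1)`, `U'_{m-1}(1)` and `U''_{m-1}(1)`, which are polynomials in `m`. Writing
`sin² = (1 - cos)(1 + cos)` splits `1/sin⁴` into partial fractions in `1 ∓ cos`, and the reflection
`j ↦ m - j` turns the sums over `1 + cos` into the sums over `1 - cos`.
-/

open Real Finset

namespace Polynomial

variable {R : Type*} [Field R]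

theorem eval_multiset_prod_X_sub_C_ne_zero {s : Multiset R} {x : R} (hx : x ∉ s) :
    (s.map (X - C ·)).prod.eval x ≠ 0 := by
  rw [eval_multiset_prod]
  refine Multiset.prod_ne_zero fun h ↦ ?_
  simp only [Multiset.map_map, Function.comp_apply, eval_sub, eval_X, eval_C, Multiset.mem_map] at h
  obtain ⟨z, hz, hxz⟩ := h
  exact hx (sub_eq_zero.mp hxz ▸ hz)

theorem derivative_derivative_X_sub_C_mul (a : R) (q : R[X]) :
    ((X - C a) * q).derivative.derivative =
      2 * q.derivative + (X - C a) * q.derivative.derivative := by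
  simp only [derivative_mul, derivative_add, derivative_sub, derivative_X, derivative_C, sub_zero,
    one_mul]
  ring

theorem eval_derivative_derivative_multiset_prod_X_sub_C {s : Multiset R} {x : R} (hx : x ∉ s) :
    (s.map (X - C ·)).prod.derivative.derivative.eval x =
      (s.map (X - C ·)).prod.eval x *
        ((s.map fun z ↦ 1 / (x - z)).sum ^ 2 - (s.map fun z ↦ 1 / (x - z) ^ 2).sum) := by
  induction s using Multiset.induction_on with
  | empty => simp
  | cons a s ih =>
    rw [Multiset.mem_cons, not_or] at hx
    have hxa : x - a ≠ 0 := sub_ne_zero.mpr hx.1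
    have hsplits : (s.map (X - C ·)).prod.Splits := Splits.multisetProd fun f hf ↦ by
      obtain ⟨z, -, rfl⟩ := Multiset.mem_map.mp hf
      exact Splits.X_sub_C z
    have hderiv := hsplits.eval_derivative_eq_eval_mul_sum (eval_multiset_prod_X_sub_C_ne_zero hx.2)
    rw [roots_multiset_prod_X_sub_C] at hderiv
    simp only [Multiset.map_cons, Multiset.prod_cons, Multiset.sum_cons,
      derivative_derivative_X_sub_C_mul, eval_add, eval_mul, eval_sub, eval_X, eval_C, eval_ofNat,
      hderiv, ih hx.2]
    field_simp
    ring

theorem Splits.eval_derivative_derivative_eq_eval_mul {f : R[X]} (hf : f.Splits) {x : R}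
    (hx : f.eval x ≠ 0) :
    f.derivative.derivative.eval x = f.eval x *
      ((f.roots.map fun z ↦ 1 / (x - z)).sum ^ 2 - (f.roots.map fun z ↦ 1 / (x - z) ^ 2).sum) := by
  have hroots : x ∉ f.roots := fun h ↦ hx (isRoot_of_mem_roots h)
  conv_lhs => rw [hf.eq_prod_roots]
  conv_rhs => arg 1; rw [hf.eq_prod_roots]
  rw [derivative_C_mul, derivative_C_mul, eval_C_mul, eval_C_mul,
    eval_derivative_derivative_multiset_prod_X_sub_C hroots, mul_assoc]

end Polynomial

namespace Polynomial.Chebyshev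

theorem derivative_derivative_U_eval_one {R : Type*} [CommRing R] (n : ℤ) :
    15 * (derivative (derivative (U R n))).eval 1 =
      (n + 3) * (n + 2) * (n + 1) * n * (n - 1) := by
  have h := iterate_derivative_U_eval_one (R := R) n 2
  simp only [prod_range_succ, prod_range_zero, Function.iterate_succ, Function.iterate_zero,
    Function.comp_apply, id] at h
  push_cast at h
  linear_combination h

theorem sum_map_roots_U_real (n : ℕ) (φ : ℝ → ℝ) :
    ((U ℝ n).roots.map φ).sum = ∑ j ∈ Ico 1 (n + 1), φ (cos (j * π / (n + 1))) := by
  classical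
  rw [roots_U_real, ← sum_eq_multiset_sum,
    sum_image (nodup_map_iff_injOn.mp (roots_U_real_nodup n)), sum_Ico_eq_sum_range]
  simp [add_comm]

theorem splits_U_real (n : ℕ) : (U ℝ n).Splits := by
  classical
  rw [splits_iff_card_roots, roots_U_real, natDegree_U_natCast, Finset.card_val,
    card_image_of_injOn (nodup_map_iff_injOn.mp (roots_U_real_nodup n)), card_range]

end Polynomial.Chebyshev

open Polynomial Polynomial.Chebyshev

theorem sum_one_div_one_sub_cos (m : ℕ) (hm : m ≠ 0) :
    ∑ j ∈ Ico 1 m, 1 / (1 - cos (j * π / m)) = ((m : ℝ) ^ 2 - 1) / 3 := by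
  obtain ⟨n, rfl⟩ := Nat.exists_eq_add_one_of_ne_zero hm
  have hU : (U ℝ n).eval 1 ≠ 0 := by rw [U_eval_one]; positivity
  have h := (splits_U_real n).eval_derivative_eq_eval_mul_sum hU
  have h3 := derivative_U_eval_one (R := ℝ) n
  rw [sum_map_roots_U_real, U_eval_one] at h
  push_cast at h h3 ⊢
  refine mul_left_cancel₀ (by positivity : (n : ℝ) + 1 ≠ 0) ?_
  linear_combination h3 / 3 - h

theorem sum_one_div_one_sub_cos_sq (m : ℕ) (hm : m ≠ 0) :
    ∑ j ∈ Ico 1 m, 1 / (1 - cos (j * π / m)) ^ 2 = ((m : ℝ) ^ 2 - 1) * (2 * m ^ 2 + 7) / 45 := by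
  have h1 := sum_one_div_one_sub_cos m hm
  obtain ⟨n, rfl⟩ := Nat.exists_eq_add_one_of_ne_zero hm
  have hU : (U ℝ n).eval 1 ≠ 0 := by rw [U_eval_one]; positivity
  have h := (splits_U_real n).eval_derivative_derivative_eq_eval_mul hU
  have h15 := derivative_derivative_U_eval_one (R := ℝ) n
  rw [sum_map_roots_U_real, sum_map_roots_U_real, U_eval_one] at h
  push_cast at h h1 h15 ⊢
  rw [h1] at h
  refine mul_left_cancel₀ (by positivity : (n : ℝ) + 1 ≠ 0) ?_
  linear_combination h - h15 / 15

theorem sum_Ico_comp_neg_cos (m : ℕ) (φ : ℝ → ℝ) :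
    ∑ j ∈ Ico 1 m, φ (-cos (j * π / m)) = ∑ j ∈ Ico 1 m, φ (cos (j * π / m)) := by
  have hreflect := sum_Ico_reflect (fun j : ℕ ↦ φ (cos (j * π / m))) 1 (Nat.le_succ m)
  rw [Nat.add_sub_cancel_left, Nat.add_sub_cancel] at hreflect
  rw [← hreflect]
  refine sum_congr rfl fun j hj ↦ ?_
  have hjm : j < m := (mem_Ico.mp hj).2
  have hm : (m : ℝ) ≠ 0 := Nat.cast_ne_zero.mpr (by omega)
  rw [Nat.cast_sub hjm.le, sub_mul, sub_div, mul_div_cancel_left₀ _ hm, cos_pi_sub]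

theorem sin_nat_mul_pi_div_pos {j m : ℕ} (hj : 0 < j) (hjm : j < m) : 0 < sin (j * π / m) := by
  have hm : (0 : ℝ) < m := by exact_mod_cast hj.trans hjm
  refine sin_pos_of_pos_of_lt_pi (div_pos (mul_pos (by exact_mod_cast hj) pi_pos) hm) ?_
  rw [div_lt_iff₀ hm, mul_comm]
  gcongr

theorem one_div_sin_pow_four_eq {θ : ℝ} (hθ : sin θ ≠ 0) :
    1 / sin θ ^ 4 =
      (1 / (1 - cos θ) ^ 2 + 1 / (1 + cos θ) ^ 2 + 1 / (1 - cos θ) + 1 / (1 + cos θ)) / 4 := by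
  have hsin : sin θ ^ 2 = (1 - cos θ) * (1 + cos θ) := by rw [sin_sq]; ring
  have hprod : (1 - cos θ) * (1 + cos θ) ≠ 0 := hsin ▸ pow_ne_zero 2 hθ
  have hsub : 1 - cos θ ≠ 0 := left_ne_zero_of_mul hprod
  have hadd : 1 + cos θ ≠ 0 := right_ne_zero_of_mul hprod
  rw [show sin θ ^ 4 = (sin θ ^ 2) ^ 2 by ring, hsin]
  field_simp
  ring

/-- For every integer `m ≥ 1`,
`∑_{j=1}^{m-1} 1 / sin⁴(jπ/m) = (m⁴ + 10m² - 11) / 45`. -/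
theorem sum_one_div_sin_pow_four (m : ℕ) (hm : 1 ≤ m) :
    ∑ j ∈ Finset.Ico 1 m, 1 / (Real.sin (j * Real.pi / m)) ^ 4
      = ((m : ℝ) ^ 4 + 10 * (m : ℝ) ^ 2 - 11) / 45 := by
  have hm0 : m ≠ 0 := Nat.one_le_iff_ne_zero.mp hm
  have hsin : ∀ j ∈ Ico 1 m, sin (j * π / m) ≠ 0 := fun j hj ↦
    (sin_nat_mul_pi_div_pos (mem_Ico.mp hj).1 (mem_Ico.mp hj).2).ne'
  have hreflect : ∑ j ∈ Ico 1 m, 1 / (1 + cos (j * π / m)) =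
      ∑ j ∈ Ico 1 m, 1 / (1 - cos (j * π / m)) := by
    simpa only [sub_neg_eq_add] using sum_Ico_comp_neg_cos m fun c ↦ 1 / (1 - c)
  have hreflect_sq : ∑ j ∈ Ico 1 m, 1 / (1 + cos (j * π / m)) ^ 2 =
      ∑ j ∈ Ico 1 m, 1 / (1 - cos (j * π / m)) ^ 2 := by
    simpa only [sub_neg_eq_add] using sum_Ico_comp_neg_cos m fun c ↦ 1 / (1 - c) ^ 2
  rw [sum_congr rfl fun j hj ↦ one_div_sin_pow_four_eq (hsin j hj), ← sum_div,
    sum_add_distrib, sum_add_distrib, sum_add_distrib, hreflect, hreflect_sq,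
    sum_one_div_one_sub_cos m hm0, sum_one_div_one_sub_cos_sq m hm0]
  ring
end

section
/- Let θ ∈ ℝ with cos θ ≠ 1, and let B = (I - R_θ)⁻¹ where R_θ is the 2×2 real rotation matrix [[cos θ, -sin θ], [sin θ, cos θ]]. Writing B = [[B₁₁, B₁₂], [B₂₁, B₂₂]], one has 1 + B₂₁² + B₁₂² - B₁₂B₂₁ - B₂₂B₁₁ = 3/(4sin²(θ/2)); consequently (1 + B₂₁² + B₁₂² - B₁₂B₂₁ - B₂₂B₁₁)/(6 sin²(θ/2)) = 1/(8 sin⁴(θ/2)). -/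
open Real Matrix

/-!
Since `1 - cos θ = 2 sin²(θ/2)` and `sin θ = 2 sin(θ/2) cos(θ/2)`, the matrix `I - R_θ` is
`2 sin(θ/2)` times a rotation, so `B = (I - R_θ)⁻¹ = ½ (I + cot(θ/2) J)` with `J` the rotation by
`π/2`. The expression then equals `¾ (1 + cot²(θ/2)) = 3 / (4 sin²(θ/2))`.
-/

theorem one_sub_cos_eq_two_mul_sin_half_sq (θ : ℝ) : 1 - cos θ = 2 * sin (θ / 2) ^ 2 := by
  rw [← cos_sq_add_sin_sq (θ / 2), show θ = 2 * (θ / 2) by ring, cos_two_mul',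
    mul_div_cancel_left₀ _ two_ne_zero]
  ring

theorem sin_half_ne_zero_of_cos_ne_one {θ : ℝ} (h : cos θ ≠ 1) : sin (θ / 2) ≠ 0 := by
  intro hs
  have := one_sub_cos_eq_two_mul_sin_half_sq θ
  rw [hs] at this
  exact h (by linarith)

theorem one_add_cot_sq {x : ℝ} (hx : sin x ≠ 0) : 1 + cot x ^ 2 = 1 / sin x ^ 2 := by
  rw [cot_eq_cos_div_sin]
  field_simp
  linear_combination cos_sq_add_sin_sq x

theorem inv_one_sub_rotation {θ : ℝ} (h : sin (θ / 2) ≠ 0) :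
    (1 - !![cos θ, -sin θ; sin θ, cos θ])⁻¹
      = !![1 / 2, -(cot (θ / 2) / 2); cot (θ / 2) / 2, 1 / 2] := by
  have hcos : cos θ = 1 - 2 * sin (θ / 2) ^ 2 := by
    linarith [one_sub_cos_eq_two_mul_sin_half_sq θ]
  have hsin : sin θ = 2 * sin (θ / 2) * cos (θ / 2) := by
    rw [← sin_two_mul, mul_div_cancel₀ _ two_ne_zero]
  have hpyth := cos_sq_add_sin_sq (θ / 2)
  refine inv_eq_right_inv ?_
  rw [hcos, hsin, cot_eq_cos_div_sin, one_fin_two]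
  simp only [of_sub_of, cons_sub_cons, empty_sub_empty, mul_fin_two]
  congrm !![?_, ?_; ?_, ?_]
  · field_simp
    linear_combination 2 * sin (θ / 2) * hpyth
  · field_simp
    ring
  · field_simp
    ring
  · field_simp
    linear_combination 2 * sin (θ / 2) * hpyth

/-- For `θ ∈ ℝ` with `cos θ ≠ 1` and `B = (I - R_θ)⁻¹` where `R_θ` is the
rotation matrix of angle `θ`, one has
`1 + B₂₁² + B₁₂² - B₁₂B₂₁ - B₂₂B₁₁ = 3/(4 sin²(θ/2))`, and consequently
`(1 + B₂₁² + B₁₂² - B₁₂B₂₁ - B₂₂B₁₁)/(6 sin²(θ/2)) = 1/(8 sin⁴(θ/2))`. -/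
theorem b1_entry_identity (θ : ℝ) (hθ : Real.cos θ ≠ 1)
    (R B : Matrix (Fin 2) (Fin 2) ℝ)
    (hR : R = !![Real.cos θ, -Real.sin θ; Real.sin θ, Real.cos θ])
    (hB : B = (1 - R)⁻¹) :
    1 + (B 1 0) ^ 2 + (B 0 1) ^ 2 - B 0 1 * B 1 0 - B 1 1 * B 0 0
      = 3 / (4 * Real.sin (θ / 2) ^ 2) ∧
    (1 + (B 1 0) ^ 2 + (B 0 1) ^ 2 - B 0 1 * B 1 0 - B 1 1 * B 0 0)
        / (6 * Real.sin (θ / 2) ^ 2)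
      = 1 / (8 * Real.sin (θ / 2) ^ 4) := by
  have hs := sin_half_ne_zero_of_cos_ne_one hθ
  have hvalue : 1 + (B 1 0) ^ 2 + (B 0 1) ^ 2 - B 0 1 * B 1 0 - B 1 1 * B 0 0
      = 3 / (4 * sin (θ / 2) ^ 2) := by
    rw [hB, hR, inv_one_sub_rotation hs]
    simp only [of_apply, cons_val_zero, cons_val_one, cons_val_fin_one]
    calc _ = 3 / 4 * (1 + cot (θ / 2) ^ 2) := by ring
      _ = _ := by rw [one_add_cot_sq hs]; ring
  refine ⟨hvalue, ?_⟩
  rw [hvalue]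
  field_simp
  ring
end

section
/- For every integer m ≥ 2, (1/m) · ∑_{j=1}^{m-1} 1/(8sin⁴(jπ/m)) = (m⁴ + 10m² - 11)/(360m); in particular ∑_{j=1}^{m-1} 1/(8sin⁴(jπ/m)) = (m⁴ + 10m² - 11)/360. -/
/-!
Put `c i = i (m - i)`. For an `m`-th root of unity `w ≠ 1` the generating functions of `i` and
`i²` give `∑_{i<m} c i wⁱ = 2 m w / (w - 1)²`, and for `w = e^{2πij/m}` one has
`w / (w - 1)² = -1 / (4 sin²(jπ/m))`. Hence `1 / (8 sin⁴(jπ/m)) = Y_j² / (2m²)`, where `Y` is the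
discrete Fourier transform of `c`. Since `c` is even modulo `m`, Parseval gives
`∑_{j<m} Y_j² = m ∑_{i<m} c i²`; the missing term `Y_0 = ∑ c i` and `∑ c i²` are power sums.
-/

open Finset

theorem sub_one_sq_mul_sum_range_mul_pow {R : Type*} [CommRing R] (x : R) (n : ℕ) :
    (x - 1) ^ 2 * ∑ i ∈ range n, (i : R) * x ^ i = (n - 1) * x ^ (n + 1) - n * x ^ n + x := by
  induction n with
  | zero => simp
  | succ n ih => rw [sum_range_succ, mul_add, ih]; push_cast; ring

theorem sub_one_pow_three_mul_sum_range_sq_mul_pow {R : Type*} [CommRing R] (x : R) (n : ℕ) :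
    (x - 1) ^ 3 * ∑ i ∈ range n, (i : R) ^ 2 * x ^ i
      = (n - 1) ^ 2 * x ^ (n + 2) - (2 * n ^ 2 - 2 * n - 1) * x ^ (n + 1) + n ^ 2 * x ^ n
        - x ^ 2 - x := by
  induction n with
  | zero => simp
  | succ n ih => rw [sum_range_succ, mul_add, ih]; push_cast; ring

theorem sum_range_mul_sub_mul_pow_of_pow_eq_one {K : Type*} [Field K] {m : ℕ} {w : K}
    (hw : w ^ m = 1) (hw1 : w ≠ 1) :
    ∑ i ∈ range m, (i : K) * (m - i) * w ^ i = 2 * m * w / (w - 1) ^ 2 := by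
  have h1 := sub_one_sq_mul_sum_range_mul_pow w m
  have h2 := sub_one_pow_three_mul_sum_range_sq_mul_pow w m
  rw [pow_succ w m, hw] at h1
  rw [pow_succ w m, pow_add w m 2, hw] at h2
  have hsplit : ∑ i ∈ range m, (i : K) * (m - i) * w ^ i
      = m * ∑ i ∈ range m, (i : K) * w ^ i - ∑ i ∈ range m, (i : K) ^ 2 * w ^ i := by
    rw [mul_sum, ← sum_sub_distrib]
    exact sum_congr rfl fun i _ => by ring
  have hw0 : w - 1 ≠ 0 := sub_ne_zero.mpr hw1
  rw [hsplit, eq_div_iff (pow_ne_zero 2 hw0)]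
  apply mul_left_cancel₀ hw0
  linear_combination (m * (w - 1)) * h1 - h2

theorem six_mul_sum_range_mul_sub {R : Type*} [CommRing R] (a : R) (n : ℕ) :
    6 * ∑ i ∈ range n, (i : R) * (a - i) = n * (n - 1) * (3 * a - 2 * n + 1) := by
  induction n with
  | zero => simp
  | succ n ih => rw [sum_range_succ, mul_add, ih]; push_cast; ring

theorem thirty_mul_sum_range_mul_sub_sq {R : Type*} [CommRing R] (a : R) (n : ℕ) :
    30 * ∑ i ∈ range n, ((i : R) * (a - i)) ^ 2
      = n * (n - 1) * (5 * a ^ 2 * (2 * n - 1) - 15 * a * n * (n - 1)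
        + (2 * n - 1) * (3 * n ^ 2 - 3 * n - 1)) := by
  induction n with
  | zero => simp
  | succ n ih => rw [sum_range_succ, mul_add, ih]; push_cast; ring

theorem Nat.dvd_add_iff_eq_sub_mod {m i k : ℕ} (hi : i < m) (hk : k < m) :
    m ∣ i + k ↔ k = (m - i) % m := by
  rcases Nat.eq_zero_or_pos i with rfl | hi0
  · simp only [zero_add, Nat.sub_zero, Nat.mod_self]
    exact ⟨fun h => Nat.eq_zero_of_dvd_of_lt h hk, fun h => h ▸ dvd_zero m⟩
  · rw [Nat.mod_eq_of_lt (by omega)]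
    constructor
    · intro h
      have := Nat.eq_of_dvd_of_lt_two_mul (by omega) h (by omega)
      omega
    · rintro rfl
      exact ⟨1, by omega⟩

namespace IsPrimitiveRoot

variable {R : Type*} [CommRing R] [IsDomain R] {ζ : R} {m : ℕ}

theorem sum_range_pow_mul (hζ : IsPrimitiveRoot ζ m) (s : ℕ) :
    ∑ j ∈ range m, ζ ^ (s * j) = if m ∣ s then (m : R) else 0 := by
  simp only [pow_mul]
  split_ifs with hs
  · simp [(hζ.pow_eq_one_iff_dvd s).mpr hs]
  · have hs1 : ζ ^ s - 1 ≠ 0 := sub_ne_zero.mpr fun h => hs ((hζ.pow_eq_one_iff_dvd s).mp h)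
    apply mul_right_cancel₀ hs1
    rw [geom_sum_mul, ← pow_mul, mul_comm, pow_mul, hζ.pow_eq_one, one_pow, sub_self, zero_mul]

theorem sum_range_sum_range_mul_pow_sq (hζ : IsPrimitiveRoot ζ m) (c : ℕ → R)
    (hc : ∀ i < m, c ((m - i) % m) = c i) :
    ∑ j ∈ range m, (∑ i ∈ range m, c i * ζ ^ (i * j)) ^ 2 = m * ∑ i ∈ range m, c i ^ 2 := by
  calc ∑ j ∈ range m, (∑ i ∈ range m, c i * ζ ^ (i * j)) ^ 2
      = ∑ i ∈ range m, ∑ k ∈ range m, c i * c k * ∑ j ∈ range m, ζ ^ ((i + k) * j) := by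
        simp_rw [sq, sum_mul_sum]
        rw [sum_comm]
        refine sum_congr rfl fun i _ => ?_
        rw [sum_comm]
        refine sum_congr rfl fun k _ => ?_
        rw [mul_sum]
        exact sum_congr rfl fun j _ => by ring
    _ = ∑ i ∈ range m, ∑ k ∈ range m, if k = (m - i) % m then c i * c k * m else 0 := by
        refine sum_congr rfl fun i hi => sum_congr rfl fun k hk => ?_
        rw [hζ.sum_range_pow_mul, mul_ite, mul_zero]
        exact if_congr (Nat.dvd_add_iff_eq_sub_mod (mem_range.mp hi) (mem_range.mp hk)) rfl rfl
    _ = m * ∑ i ∈ range m, c i ^ 2 := by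
        rw [mul_sum]
        refine sum_congr rfl fun i hi => ?_
        have hi := mem_range.mp hi
        rw [sum_ite_eq', if_pos (mem_range.mpr (Nat.mod_lt _ (by omega))), hc i hi]
        ring

end IsPrimitiveRoot

namespace Complex

theorem four_mul_sin_sq_mul_exp (z : ℂ) :
    4 * sin z ^ 2 * exp (2 * z * I) = -(exp (2 * z * I) - 1) ^ 2 := by
  have e1 : exp (-z * I) * exp (z * I) = 1 := by rw [← exp_add, neg_mul, neg_add_cancel, exp_zero]
  have e2 : exp (z * I) ^ 2 = exp (2 * z * I) := by rw [sq, ← exp_add]; ring_nf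
  have h : 2 * I * sin z * exp (z * I) = exp (2 * z * I) - 1 := by
    rw [sin]
    linear_combination (exp (-z * I) * exp (z * I) - exp (z * I) ^ 2) * I_sq - e1 + e2
  linear_combination (-(exp (2 * z * I) - 1 + 2 * I * sin z * exp (z * I))) * h
    + 4 * sin z ^ 2 * exp (z * I) ^ 2 * I_sq - 4 * sin z ^ 2 * e2

theorem one_div_eight_mul_sin_pow_four (z : ℂ) :
    1 / (8 * sin z ^ 4) = 2 * (exp (2 * z * I) / (exp (2 * z * I) - 1) ^ 2) ^ 2 := by
  have h := four_mul_sin_sq_mul_exp z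
  set w := exp (2 * z * I)
  -- if `sin z = 0` then `w = 1`, and both sides vanish because `x / 0 = 0`
  by_cases hs : sin z = 0
  · have : w - 1 = 0 := by simpa [hs] using h
    simp [hs, this]
  · have hw1 : w - 1 ≠ 0 := fun h1 => by simp_all
    field_simp
    linear_combination ((w - 1) ^ 2 - 4 * sin z ^ 2 * w) * h

end Complex

open Complex in
theorem sum_Ico_one_div_eight_mul_sin_pow_four {m : ℕ} (hm : m ≠ 0) :
    ∑ j ∈ Ico 1 m, 1 / (8 * Real.sin (j * Real.pi / m) ^ 4)
      = ((m : ℝ) ^ 4 + 10 * (m : ℝ) ^ 2 - 11) / 360 := by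
  set ζ := exp (2 * Real.pi * I / m)
  have hζ : IsPrimitiveRoot ζ m := isPrimitiveRoot_exp m hm
  set c : ℕ → ℂ := fun i => i * (m - i) with hc_def
  set Y : ℕ → ℂ := fun j => ∑ i ∈ range m, c i * ζ ^ (i * j) with hY_def
  have hterm : ∀ j ∈ Ico 1 m,
      ((1 / (8 * Real.sin (j * Real.pi / m) ^ 4) : ℝ) : ℂ) = Y j ^ 2 / (2 * m ^ 2) := by
    intro j hj
    obtain ⟨hj1, hjm⟩ := mem_Ico.mp hj
    have hw : (ζ ^ j) ^ m = 1 := by rw [← pow_mul, mul_comm, pow_mul, hζ.pow_eq_one, one_pow]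
    have hw1 : ζ ^ j ≠ 1 := hζ.pow_ne_one_of_pos_of_lt (by omega) hjm
    have hY : Y j = 2 * m * ζ ^ j / (ζ ^ j - 1) ^ 2 := by
      rw [← sum_range_mul_sub_mul_pow_of_pow_eq_one hw hw1]
      exact sum_congr rfl fun i _ => by rw [← pow_mul, mul_comm j i]
    have hexp : exp (2 * (j * Real.pi / m) * I) = ζ ^ j := by
      rw [← exp_nat_mul]
      ring_nf
    push_cast
    rw [one_div_eight_mul_sin_pow_four, hexp, hY]
    field_simp
  have hY0 : Y 0 = m * (m ^ 2 - 1) / 6 := by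
    have := six_mul_sum_range_mul_sub (m : ℂ) m
    simp only [hY_def, hc_def, mul_zero, pow_zero, mul_one]
    linear_combination this / 6
  have hc : ∀ i < m, c ((m - i) % m) = c i := by
    intro i hi
    rcases Nat.eq_zero_or_pos i with rfl | hi0
    · simp
    · rw [Nat.mod_eq_of_lt (by omega : m - i < m)]
      simp only [hc_def, Nat.cast_sub hi.le]
      ring
  have hParseval : ∑ j ∈ range m, Y j ^ 2 = m * (m * (m ^ 4 - 1) / 30) := by
    have := thirty_mul_sum_range_mul_sub_sq (m : ℂ) m
    rw [hζ.sum_range_sum_range_mul_pow_sq c hc]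
    linear_combination (m : ℂ) / 30 * this
  have hsplit := sum_range_eq_add_Ico (fun j => Y j ^ 2) (Nat.pos_of_ne_zero hm)
  apply ofReal_injective
  rw [ofReal_sum, sum_congr rfl hterm, ← sum_div, eq_sub_of_add_eq' hsplit.symm, hParseval, hY0]
  push_cast
  field_simp
  ring

/-- For every integer `m ≥ 2`,
`(1/m) ∑_{j=1}^{m-1} 1/(8 sin⁴(jπ/m)) = (m⁴ + 10m² - 11)/(360m)`, and in
particular `∑_{j=1}^{m-1} 1/(8 sin⁴(jπ/m)) = (m⁴ + 10m² - 11)/360`. -/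
theorem cone_point_degree_one (m : ℕ) (hm : 2 ≤ m) :
    (1 / (m : ℝ)) * ∑ j ∈ Finset.Ico 1 m, 1 / (8 * Real.sin (j * Real.pi / m) ^ 4)
      = ((m : ℝ) ^ 4 + 10 * (m : ℝ) ^ 2 - 11) / (360 * m) ∧
    ∑ j ∈ Finset.Ico 1 m, 1 / (8 * Real.sin (j * Real.pi / m) ^ 4)
      = ((m : ℝ) ^ 4 + 10 * (m : ℝ) ^ 2 - 11) / 360 := by
  have h := sum_Ico_one_div_eight_mul_sin_pow_four (m := m) (by omega)
  refine ⟨?_, h⟩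
  rw [h, one_div, inv_mul_eq_div, div_div]
end

section
/- For all integers m, r, s ≥ 2, one has 2 + m + 1/m ≠ r + s + 1/r + 1/s in ℚ. -/
/-- The spectral invariant `c` distinguishes teardrops from footballs: for
integers `m, r, s ≥ 2`, `2 + m + 1/m ≠ r + s + 1/r + 1/s` in `ℚ`. -/
theorem teardrop_ne_football (m r s : ℕ) (hm : 2 ≤ m) (hr : 2 ≤ r) (hs : 2 ≤ s) :
    2 + (m : ℚ) + 1 / m ≠ (r : ℚ) + s + 1 / r + 1 / s := by
  intro h
  have hmQ : (2 : ℚ) ≤ (m : ℚ) := by exact_mod_cast hm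
  have hrQ : (2 : ℚ) ≤ (r : ℚ) := by exact_mod_cast hr
  have hsQ : (2 : ℚ) ≤ (s : ℚ) := by exact_mod_cast hs
  have hm0 : (0 : ℚ) < (m : ℚ) := by linarith
  have hr0 : (0 : ℚ) < (r : ℚ) := by linarith
  have hs0 : (0 : ℚ) < (s : ℚ) := by linarith
  have h1m : 1 / (m : ℚ) ≤ 1 / 2 := by
    rw [div_le_div_iff₀ hm0 (by norm_num)]; linarith
  have h1m0 : 0 < 1 / (m : ℚ) := by positivity
  have h1r : 1 / (r : ℚ) ≤ 1 / 2 := by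
    rw [div_le_div_iff₀ hr0 (by norm_num)]; linarith
  have h1s : 1 / (s : ℚ) ≤ 1 / 2 := by
    rw [div_le_div_iff₀ hs0 (by norm_num)]; linarith
  have h1r0 : 0 < 1 / (r : ℚ) := by positivity
  have h1s0 : 0 < 1 / (s : ℚ) := by positivity
  -- d = (r+s) - (m+2) is an integer equal to 1/m - 1/r - 1/s, strictly between -1 and 1
  have hd : ((r : ℚ) + s) - ((m : ℚ) + 2) = 1 / m - 1 / r - 1 / s := by linarith
  set d : ℤ := (r : ℤ) + s - m - 2 with hddef
  have hdQ : (d : ℚ) = 1 / m - 1 / r - 1 / s := by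
    push_cast [hddef]
    linarith
  have hd1 : (d : ℚ) < 1 := by rw [hdQ]; linarith
  have hd2 : (-1 : ℚ) < (d : ℚ) := by rw [hdQ]; linarith
  have hd0 : d = 0 := by
    have h1 : d < 1 := by exact_mod_cast hd1
    have h2 : (-1 : ℤ) < d := by exact_mod_cast hd2
    omega
  have hsum : (r : ℚ) + s = (m : ℚ) + 2 := by
    have := hdQ
    rw [hd0] at this
    push_cast at this
    linarith
  have hfrac : 1 / (r : ℚ) + 1 / s = 1 / m := by linarith
  -- multiply out: m * (r + s) = r * s
  have hmul : (m : ℚ) * ((r : ℚ) + s) = (r : ℚ) * s := by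
    have h2 : ((r : ℚ) + s) / ((r : ℚ) * s) = 1 / m := by
      rw [← hfrac]
      field_simp
      ring
    have hrs0 : (0 : ℚ) < (r : ℚ) * s := by positivity
    field_simp at h2
    linarith
  -- so r*s = m*(m+2), but AM-GM gives 4rs ≤ (r+s)² = (m+2)²
  have hrs : (r : ℚ) * s = (m : ℚ) * ((m : ℚ) + 2) := by rw [← hmul, hsum]
  have hamgm : 4 * ((r : ℚ) * s) ≤ ((r : ℚ) + s) ^ 2 := by nlinarith [sq_nonneg ((r : ℚ) - s)]
  rw [hrs, hsum] at hamgm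
  nlinarith
end

section
/- For all integers r, s, r', s' ≥ 2, if r + s + 1/r + 1/s = r' + s' + 1/r' + 1/s' in ℚ, then {r, s} = {r', s'} as unordered pairs (i.e., r = r' and s = s', or r = s' and s = r'). -/
/-- The spectral invariant `c = r + s + 1/r + 1/s` determines the unordered
pair of cone point orders of a football: for integers `r, s, r', s' ≥ 2`, if
`r + s + 1/r + 1/s = r' + s' + 1/r' + 1/s'` in `ℚ` then `{r, s} = {r', s'}`. -/
theorem football_invariant_determines_pair (r s r' s' : ℕ)
    (hr : 2 ≤ r) (hs : 2 ≤ s) (hr' : 2 ≤ r') (hs' : 2 ≤ s')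
    (h : (r : ℚ) + s + 1 / r + 1 / s = (r' : ℚ) + s' + 1 / r' + 1 / s') :
    (r = r' ∧ s = s') ∨ (r = s' ∧ s = r') := by
  have hrQ : (2:ℚ) ≤ (r:ℚ) := by exact_mod_cast hr
  have hsQ : (2:ℚ) ≤ (s:ℚ) := by exact_mod_cast hs
  have hrQ' : (2:ℚ) ≤ (r':ℚ) := by exact_mod_cast hr'
  have hsQ' : (2:ℚ) ≤ (s':ℚ) := by exact_mod_cast hs'
  have hr0 : (0:ℚ) < r := by linarith
  have hs0 : (0:ℚ) < s := by linarith
  have hr0' : (0:ℚ) < r' := by linarith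
  have hs0' : (0:ℚ) < s' := by linarith
  have b1 : (1:ℚ)/r ≤ 1/2 := by
    rw [div_le_div_iff₀ hr0 (by norm_num)]; linarith
  have b2 : (1:ℚ)/s ≤ 1/2 := by
    rw [div_le_div_iff₀ hs0 (by norm_num)]; linarith
  have b3 : (1:ℚ)/r' ≤ 1/2 := by
    rw [div_le_div_iff₀ hr0' (by norm_num)]; linarith
  have b4 : (1:ℚ)/s' ≤ 1/2 := by
    rw [div_le_div_iff₀ hs0' (by norm_num)]; linarith
  have p1 : (0:ℚ) < 1/r := by positivity
  have p2 : (0:ℚ) < 1/s := by positivity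
  have p3 : (0:ℚ) < 1/r' := by positivity
  have p4 : (0:ℚ) < 1/s' := by positivity
  -- the integer parts agree
  have hsumZ : (r:ℤ) + s = (r':ℤ) + s' := by
    have h1 : (((r:ℤ) + s : ℤ) : ℚ) - (((r':ℤ) + s' : ℤ) : ℚ) < 1 := by
      push_cast; linarith
    have h2 : (-1:ℚ) < (((r:ℤ) + s : ℤ) : ℚ) - (((r':ℤ) + s' : ℤ) : ℚ) := by
      push_cast; linarith
    have h1' : ((r:ℤ) + s) - ((r':ℤ) + s') < 1 := by exact_mod_cast h1
    have h2' : (-1:ℤ) < ((r:ℤ) + s) - ((r':ℤ) + s') := by exact_mod_cast h2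
    omega
  have hsum : r + s = r' + s' := by exact_mod_cast hsumZ
  -- the fractional parts agree
  have heq : (1:ℚ)/r + 1/s = 1/r'+1/s' := by
    have : ((r:ℚ) + s) = (r':ℚ) + s' := by exact_mod_cast hsumZ
    linarith
  -- hence products agree
  have hprodQ : (r:ℚ) * s = (r':ℚ) * s' := by
    have hsQeq : ((r:ℚ) + s) = (r':ℚ) + s' := by exact_mod_cast hsumZ
    have hne : ((r:ℚ) + s) ≠ 0 := by linarith
    field_simp at heq
    have key : ((r:ℚ) + s) * ((r':ℚ) * s') = ((r:ℚ) + s) * ((r:ℚ) * s) := by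
      linear_combination heq - (r:ℚ) * s * hsQeq
    exact (mul_left_cancel₀ hne key).symm
  have hprod : r * s = r' * s' := by exact_mod_cast hprodQ
  -- quadratic factorization over ℤ
  have hz : ((r:ℤ) - r') * ((r:ℤ) - s') = 0 := by
    have h1 : (r:ℤ) + s = r' + s' := by exact_mod_cast hsum
    have h2 : (r:ℤ) * s = r' * s' := by exact_mod_cast hprod
    nlinarith [h1, h2]
  rcases mul_eq_zero.mp hz with h0 | h0
  · left
    have : r = r' := by omega
    exact ⟨this, by omega⟩
  · right
    have : r = s' := by omega
    exact ⟨this, by omega⟩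
end

section
/- For all integers m, p, q, r ≥ 2 with 1/p + 1/q + 1/r > 1, one has 2 + m + 1/m ≠ -2 + p + q + r + 1/p + 1/q + 1/r in ℚ. -/
/-!
Clearing the integer parts: the fractional part of `m + 1/m` is `1/m`, while
`x := 1/p + 1/q + 1/r` lies in `(1, 3/2]`, so the equation forces `m = p + q + r - 3` and
`1/m = x - 1`. Positivity of `χ` leaves only the triples `(2, 2, n)`, `(2, 3, 3)`, `(2, 3, 4)`
and `(2, 3, 5)`, for which `x - 1` is `1/n`, `1/6`, `1/12`, `1/30` while `p + q + r - 3` is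
`n + 1`, `5`, `6`, `7`.
-/

lemma fract_natCast_add_one_div {m : ℕ} (hm : 2 ≤ m) :
    Int.fract ((m : ℚ) + 1 / m) = 1 / m := by
  have hmQ : (2 : ℚ) ≤ m := by exact_mod_cast hm
  rw [Int.fract_natCast_add, Int.fract_eq_self]
  exact ⟨by positivity, by rw [div_lt_one (by linarith)]; linarith⟩

lemma eq_of_natCast_add_one_div_eq_intCast_add {m : ℕ} (hm : 2 ≤ m) {k : ℤ} {e : ℚ}
    (he₀ : 0 ≤ e) (he₁ : e < 1) (h : (m : ℚ) + 1 / m = k + e) :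
    (m : ℚ) = k ∧ 1 / (m : ℚ) = e := by
  have hfract := congrArg Int.fract h
  rw [fract_natCast_add_one_div hm, Int.fract_intCast_add, Int.fract_eq_self.2 ⟨he₀, he₁⟩]
    at hfract
  exact ⟨by linarith, hfract⟩

lemma eq_two_of_one_lt_sum_one_div {p q r : ℕ} (hχ : 1 < 1 / (p : ℚ) + 1 / q + 1 / r)
    (hp : 2 ≤ p) (hq : 2 ≤ q) (hr : 2 ≤ r) : p = 2 ∨ q = 2 ∨ r = 2 := by
  by_contra! h
  have hp' : 1 / (p : ℚ) ≤ 1 / 3 := one_div_le_one_div_of_le (by norm_num) (by norm_cast; omega)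
  have hq' : 1 / (q : ℚ) ≤ 1 / 3 := one_div_le_one_div_of_le (by norm_num) (by norm_cast; omega)
  have hr' : 1 / (r : ℚ) ≤ 1 / 3 := one_div_le_one_div_of_le (by norm_num) (by norm_cast; omega)
  linarith

lemma one_div_sum_sub_three_ne_of_two {a b : ℕ} (ha : 2 ≤ a) (hb : 2 ≤ b)
    (hχ : 1 < 1 / (2 : ℚ) + 1 / a + 1 / b) :
    1 / ((2 : ℚ) + a + b - 3) ≠ 1 / 2 + 1 / a + 1 / b - 1 := by
  wlog hab : a ≤ b generalizing a b
  · intro h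
    exact this hb ha (by linarith) (by omega) (by convert h using 2 <;> ring)
  intro h
  rcases ha.eq_or_lt with rfl | ha₃
  · norm_num at h
    linarith
  have hb₅ : b ≤ 5 := by
    by_contra! hb₆
    have ha' : 1 / (a : ℚ) ≤ 1 / 3 := one_div_le_one_div_of_le (by norm_num) (by exact_mod_cast ha₃)
    have hb' : 1 / (b : ℚ) ≤ 1 / 6 := one_div_le_one_div_of_le (by norm_num) (by exact_mod_cast hb₆)
    linarith
  have ha₅ : a ≤ 5 := hab.trans hb₅
  interval_cases a <;> interval_cases b <;> norm_num at *

lemma one_div_sum_sub_three_ne {p q r : ℕ} (hp : 2 ≤ p) (hq : 2 ≤ q) (hr : 2 ≤ r)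
    (hχ : 1 < 1 / (p : ℚ) + 1 / q + 1 / r) :
    1 / ((p : ℚ) + q + r - 3) ≠ 1 / p + 1 / q + 1 / r - 1 := by
  rcases eq_two_of_one_lt_sum_one_div hχ hp hq hr with rfl | rfl | rfl
  · exact one_div_sum_sub_three_ne_of_two hq hr (by exact_mod_cast hχ)
  · convert one_div_sum_sub_three_ne_of_two hp hr (by push_cast at hχ ⊢; linarith) using 2 <;>
      push_cast <;> ring
  · convert one_div_sum_sub_three_ne_of_two hp hq (by push_cast at hχ ⊢; linarith) using 2 <;>
      push_cast <;> ring

/-- The invariant `c` distinguishes teardrops from triangular pillows of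
positive Euler characteristic: for integers `m, p, q, r ≥ 2` with
`1/p + 1/q + 1/r > 1`, one has `2 + m + 1/m ≠ -2 + p + q + r + 1/p + 1/q + 1/r`
in `ℚ`. -/
theorem teardrop_ne_spherical_pillow (m p q r : ℕ)
    (hm : 2 ≤ m) (hp : 2 ≤ p) (hq : 2 ≤ q) (hr : 2 ≤ r)
    (hχ : 1 < 1 / (p : ℚ) + 1 / q + 1 / r) :
    2 + (m : ℚ) + 1 / m ≠ -2 + (p : ℚ) + q + r + 1 / p + 1 / q + 1 / r := by
  intro h
  have hp' : 1 / (p : ℚ) ≤ 1 / 2 := one_div_le_one_div_of_le (by norm_num) (by exact_mod_cast hp)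
  have hq' : 1 / (q : ℚ) ≤ 1 / 2 := one_div_le_one_div_of_le (by norm_num) (by exact_mod_cast hq)
  have hr' : 1 / (r : ℚ) ≤ 1 / 2 := one_div_le_one_div_of_le (by norm_num) (by exact_mod_cast hr)
  obtain ⟨hm_eq, hm_inv⟩ := eq_of_natCast_add_one_div_eq_intCast_add hm
    (k := p + q + r - 3) (e := 1 / p + 1 / q + 1 / r - 1)
    (by linarith) (by linarith) (by push_cast; linarith)
  push_cast at hm_eq
  exact one_div_sum_sub_three_ne hp hq hr hχ (hm_eq ▸ hm_inv)
end

section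
/- For all integers p, q, u ≥ 2 with 1/p + 1/q + 1/u > 1 and all integers r, s ≥ 2, one has -2 + p + q + u + 1/p + 1/q + 1/u ≠ r + s + 1/r + 1/s in ℚ. -/
private lemma pillow_key (P Q U : ℚ) (hP : 2 ≤ P) (hQ : 2 ≤ Q) (hU : 2 ≤ U) :
    (Q*U + P*U + P*Q - P*Q*U) * (P + Q + U - 1) < 4*(P*Q*U) := by
  obtain ⟨x, hx, rfl⟩ : ∃ x, 0 ≤ x ∧ P = 2 + x := ⟨P - 2, by linarith, by ring⟩
  obtain ⟨y, hy, rfl⟩ : ∃ y, 0 ≤ y ∧ Q = 2 + y := ⟨Q - 2, by linarith, by ring⟩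
  obtain ⟨z, hz, rfl⟩ : ∃ z, 0 ≤ z ∧ U = 2 + z := ⟨U - 2, by linarith, by ring⟩
  have hid : 4*((2+x)*(2+y)*(2+z)) -
      ((2+y)*(2+z) + (2+x)*(2+z) + (2+x)*(2+y) - (2+x)*(2+y)*(2+z)) * ((2+x) + (2+y) + (2+z) - 1)
      = 12 + 12*z + 12*y + 13*y*z + y*z^2 + y^2*z + 12*x + 13*x*z + x*z^2 + 13*x*y
        + 12*x*y*z + x*y*z^2 + x*y^2 + x*y^2*z + x^2*z + x^2*y + x^2*y*z := by ring
  have hpos : (0:ℚ) < 12 + 12*z + 12*y + 13*y*z + y*z^2 + y^2*z + 12*x + 13*x*z + x*z^2 + 13*x*y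
        + 12*x*y*z + x*y*z^2 + x*y^2 + x*y^2*z + x^2*z + x^2*y + x^2*y*z := by positivity
  linarith [hid, hpos]

/-- The invariant `c` distinguishes triangular pillows of positive Euler
characteristic from footballs: for integers `p, q, u ≥ 2` with
`1/p + 1/q + 1/u > 1` and integers `r, s ≥ 2`, one has
`-2 + p + q + u + 1/p + 1/q + 1/u ≠ r + s + 1/r + 1/s` in `ℚ`. -/
theorem spherical_pillow_ne_football (p q u r s : ℕ)
    (hp : 2 ≤ p) (hq : 2 ≤ q) (hu : 2 ≤ u) (hr : 2 ≤ r) (hs : 2 ≤ s)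
    (hχ : 1 < 1 / (p : ℚ) + 1 / q + 1 / u) :
    -2 + (p : ℚ) + q + u + 1 / p + 1 / q + 1 / u ≠ (r : ℚ) + s + 1 / r + 1 / s := by
  intro h
  have hp' : (2:ℚ) ≤ p := by exact_mod_cast hp
  have hq' : (2:ℚ) ≤ q := by exact_mod_cast hq
  have hu' : (2:ℚ) ≤ u := by exact_mod_cast hu
  have hr' : (2:ℚ) ≤ r := by exact_mod_cast hr
  have hs' : (2:ℚ) ≤ s := by exact_mod_cast hs
  have hp0 : (0:ℚ) < p := by linarith
  have hq0 : (0:ℚ) < q := by linarith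
  have hu0 : (0:ℚ) < u := by linarith
  have hr0 : (0:ℚ) < r := by linarith
  have hs0 : (0:ℚ) < s := by linarith
  have hpne : (p:ℚ) ≠ 0 := ne_of_gt hp0
  have hqne : (q:ℚ) ≠ 0 := ne_of_gt hq0
  have hune : (u:ℚ) ≠ 0 := ne_of_gt hu0
  have hrne : (r:ℚ) ≠ 0 := ne_of_gt hr0
  have hsne : (s:ℚ) ≠ 0 := ne_of_gt hs0
  have hip : 1 / (p:ℚ) ≤ 1/2 := by
    rw [div_le_div_iff₀ hp0 (by norm_num)]; linarith
  have hiq : 1 / (q:ℚ) ≤ 1/2 := by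
    rw [div_le_div_iff₀ hq0 (by norm_num)]; linarith
  have hiu : 1 / (u:ℚ) ≤ 1/2 := by
    rw [div_le_div_iff₀ hu0 (by norm_num)]; linarith
  have hir : 1 / (r:ℚ) ≤ 1/2 := by
    rw [div_le_div_iff₀ hr0 (by norm_num)]; linarith
  have his : 1 / (s:ℚ) ≤ 1/2 := by
    rw [div_le_div_iff₀ hs0 (by norm_num)]; linarith
  have hir0 : 0 < 1 / (r:ℚ) := by positivity
  have his0 : 0 < 1 / (s:ℚ) := by positivity
  -- the difference of fractional parts is an integer, hence equal to 1
  set n : ℤ := (r:ℤ) + s + 2 - p - q - u with hn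
  have hcast : (n:ℚ) = (1/(p:ℚ) + 1/q + 1/u) - (1/(r:ℚ) + 1/s) := by
    push_cast [hn]; linarith
  have hn1 : n = 1 := by
    have h1 : (0:ℚ) < n := by rw [hcast]; linarith
    have h2 : (n:ℚ) < 2 := by rw [hcast]; linarith
    have h1' : 0 < n := by exact_mod_cast h1
    have h2' : n < 2 := by exact_mod_cast h2
    omega
  have hB : 1/(r:ℚ) + 1/s = 1/(p:ℚ) + 1/q + 1/u - 1 := by
    rw [hn1] at hcast; push_cast at hcast; linarith
  have hN : (r:ℚ) + s = (p:ℚ) + q + u - 1 := by linarith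
  -- clear denominators
  have hχ' : (p:ℚ)*q*u < q*u + p*u + p*q := by
    have e1 : (1/(p:ℚ) + 1/q + 1/u) * (p*q*u) = q*u + p*u + p*q := by
      field_simp
    have e2 := mul_lt_mul_of_pos_right hχ (by positivity : (0:ℚ) < p*q*u)
    rw [e1, one_mul] at e2
    exact e2
  have h3 : (1/(r:ℚ)+1/s) * ((r:ℚ)*s*(p*q*u)) = (1/(p:ℚ)+1/q+1/u-1) * ((r:ℚ)*s*(p*q*u)) := by
    rw [hB]
  have lhs : (1/(r:ℚ)+1/s) * ((r:ℚ)*s*(p*q*u)) = ((r:ℚ)+s)*((p:ℚ)*q*u) := by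
    field_simp; ring
  have rhs : (1/(p:ℚ)+1/q+1/u-1) * ((r:ℚ)*s*(p*q*u)) = ((q:ℚ)*u+p*u+p*q-p*q*u)*((r:ℚ)*s) := by
    field_simp
  have hpoly : ((r:ℚ)+s) * ((p:ℚ)*q*u) = ((q:ℚ)*u+p*u+p*q-p*q*u)*((r:ℚ)*s) := by
    rw [← lhs, h3, rhs]
  -- the key polynomial inequality
  have hTN : ((q:ℚ)*u+p*u+p*q-p*q*u) * ((p:ℚ)+q+u-1) < 4*((p:ℚ)*q*u) :=
    pillow_key _ _ _ hp' hq' hu'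
  -- AM-GM: 4rs ≤ (r+s)^2
  clear h hB hχ hcast h3 lhs rhs hip hiq hiu hir his hir0 his0 hn1 hn
  have h4rs : 4*((r:ℚ)*s) ≤ ((r:ℚ)+s)^2 := by nlinarith [sq_nonneg ((r:ℚ)-s)]
  have hT0 : (0:ℚ) < (q:ℚ)*u+p*u+p*q-p*q*u := by linarith
  have hNpos : (0:ℚ) < (p:ℚ)+q+u-1 := by linarith
  have step1 : ((q:ℚ)*u+p*u+p*q-p*q*u) * (4*((r:ℚ)*s)) ≤ ((q:ℚ)*u+p*u+p*q-p*q*u) * (((r:ℚ)+s)^2) :=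
    mul_le_mul_of_nonneg_left h4rs (le_of_lt hT0)
  have step2 : ((q:ℚ)*u+p*u+p*q-p*q*u) * ((p:ℚ)+q+u-1) * ((p:ℚ)+q+u-1) < 4*((p:ℚ)*q*u) * ((p:ℚ)+q+u-1) :=
    mul_lt_mul_of_pos_right hTN hNpos
  rw [hN] at step1
  rw [hN] at hpoly
  linarith [hpoly, step1, step2]
end

section
/- Let S and T be finite multisets of integers, each of whose elements is ≥ 2, and suppose ∑_{m∈S}(1 - 1/m) ≤ 2 and ∑_{m∈T}(1 - 1/m) ≤ 2 in ℚ. If ∑_{m∈S}(m + 1/m - 2) = ∑_{m∈T}(m + 1/m - 2), then S = T. -/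
/-!
Up to the constant `4`, the invariant is `∑ (m - 2) + ∑ 1/m`, an integer plus a reciprocal sum.
Nonnegative Euler characteristic leaves only the empty multiset, `{m}`, `{a, b}`, `{2, 2, m}` and
seven sporadic multisets. On the four families the reciprocal sum, after dropping the integer
`1/2 + 1/2` of `{2, 2, m}`, lies in `(0, 1]`, so equal invariants have equal reciprocal sums and
equal integer parts; a pair `{a, b}` is then recovered from `a + b` and `ab = (a + b)/(1/a + 1/b)`.
The sporadic invariants are distinct and small, so they are compared with the families by a
bounded search.
-/

theorem Int.eq_zero_of_cast_eq_sub_of_mem_Ioc {α : Type*} [CommRing α] [LinearOrder α]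
    [IsStrictOrderedRing α] {x y : α} (hx : x ∈ Set.Ioc 0 1) (hy : y ∈ Set.Ioc 0 1) {k : ℤ}
    (h : (k : α) = x - y) : k = 0 := by
  obtain ⟨hx0, hx1⟩ := hx
  obtain ⟨hy0, hy1⟩ := hy
  have hlo : ((-1 : ℤ) : α) < k := by rw [h]; push_cast; linarith
  have hhi : (k : α) < ((1 : ℤ) : α) := by rw [h]; push_cast; linarith
  have := Int.cast_lt.mp hlo
  have := Int.cast_lt.mp hhi
  omega

theorem Multiset.pair_eq_pair_of_add_eq_of_mul_eq {R : Type*} [CommRing R] [NoZeroDivisors R]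
    {a b c d : R} (hs : a + b = c + d) (hp : a * b = c * d) : ({a, b} : Multiset R) = {c, d} := by
  have : (a - c) * (a - d) = 0 := by linear_combination a * hs - hp
  rcases mul_eq_zero.mp this with hac | had
  · obtain rfl : a = c := sub_eq_zero.mp hac
    rw [add_left_cancel hs]
  · obtain rfl : a = d := sub_eq_zero.mp had
    rw [add_comm c a] at hs
    rw [add_left_cancel hs, Multiset.pair_comm]

namespace ConeOrders

def coneTerm (m : ℤ) : ℚ := m + 1 / m - 2

def coneSum (S : Multiset ℤ) : ℚ := (S.map coneTerm).sum

def NonnegEulerChar (S : Multiset ℤ) : Prop :=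
  (∀ m ∈ S, 2 ≤ m) ∧ (S.map fun m : ℤ => 1 - 1 / (m : ℚ)).sum ≤ 2

section

variable {a b c d m n : ℤ}

theorem one_div_mem_Ioc (hm : 2 ≤ m) : 1 / (m : ℚ) ∈ Set.Ioc 0 (1 / 2) :=
  ⟨by have : (0 : ℚ) < m := by exact_mod_cast (by omega : (0 : ℤ) < m)
      positivity,
    one_div_le_one_div_of_le two_pos (by exact_mod_cast hm)⟩

theorem lt_of_one_div_lt (ha : 2 ≤ a) (h : 1 / (a : ℚ) < 1 / m) : m < a := by
  exact_mod_cast lt_of_one_div_lt_one_div (by exact_mod_cast (by omega : (0 : ℤ) < a)) h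

theorem coneTerm_two : coneTerm 2 = 1 / 2 := by norm_num [coneTerm]

theorem half_le_coneTerm (hm : 2 ≤ m) : 1 / 2 ≤ coneTerm m := by
  rcases hm.eq_or_lt with rfl | h3
  · rw [coneTerm_two]
  · have : (3 : ℚ) ≤ m := by exact_mod_cast h3
    have := (one_div_mem_Ioc hm).1
    unfold coneTerm; linarith

theorem sub_two_lt_coneTerm (hm : 2 ≤ m) : (m : ℚ) - 2 < coneTerm m := by
  have := (one_div_mem_Ioc hm).1
  unfold coneTerm; linarith

@[simp]
theorem coneSum_zero : coneSum 0 = 0 := by simp [coneSum]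

@[simp]
theorem coneSum_cons (m : ℤ) (S : Multiset ℤ) :
    coneSum (m ::ₘ S) = coneTerm m + coneSum S := by
  simp [coneSum]

@[simp]
theorem coneSum_singleton (m : ℤ) : coneSum {m} = coneTerm m := by simp [coneSum]

theorem coneSum_two_two (m : ℤ) : coneSum {2, 2, m} = coneTerm m + 1 := by
  simp only [Multiset.insert_eq_cons, coneSum_cons, coneSum_singleton, coneTerm_two]
  ring

def sporadic : List (Multiset ℤ) :=
  [{2, 3, 3}, {2, 3, 4}, {2, 3, 5}, {2, 3, 6}, {2, 4, 4}, {3, 3, 3}, {2, 2, 2, 2}]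

theorem card_le_four {S : Multiset ℤ} (hS : NonnegEulerChar S) : Multiset.card S ≤ 4 := by
  have hhalf : ∀ x ∈ S.map (fun m : ℤ => 1 - 1 / (m : ℚ)), 1 / 2 ≤ x := by
    simp only [Multiset.mem_map, forall_exists_index, and_imp, forall_apply_eq_imp_iff₂]
    intro m hm
    linarith [(one_div_mem_Ioc (hS.1 m hm)).2]
  have := (Multiset.card_nsmul_le_sum hhalf).trans hS.2
  rw [Multiset.card_map, nsmul_eq_mul] at this
  exact_mod_cast (by linarith : (Multiset.card S : ℚ) ≤ 4)

theorem triple_classification (ha : 2 ≤ a) (hab : a ≤ b) (hbc : b ≤ c)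
    (hχ : 1 ≤ 1 / (a : ℚ) + 1 / b + 1 / c) :
    a = 2 ∧ b = 2 ∨ ({a, b, c} : Multiset ℤ) ∈ sporadic := by
  have hb : 0 ≤ b := by omega
  have hc : 0 ≤ c := by omega
  have h : a * b * c ≤ b * c + a * c + a * b := by
    have : (0 : ℚ) < a := by exact_mod_cast (by omega : 0 < a)
    have : (0 : ℚ) < b := by exact_mod_cast (by omega : 0 < b)
    have : (0 : ℚ) < c := by exact_mod_cast (by omega : 0 < c)
    field_simp at hχ
    exact_mod_cast (by push_cast; linarith : ((a * b * c : ℤ) : ℚ) ≤ (b * c + a * c + a * b : ℤ))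
  have : a ≤ 3 := by
    nlinarith [mul_nonneg (sub_nonneg.2 hab) hc, mul_nonneg (sub_nonneg.2 (hab.trans hbc)) hb,
      mul_nonneg hb hc]
  interval_cases a
  · have : b ≤ 4 := by nlinarith
    interval_cases b
    · exact Or.inl ⟨rfl, rfl⟩
    · have : c ≤ 6 := by nlinarith
      interval_cases c <;> simp [sporadic]
    · have : c ≤ 4 := by nlinarith
      interval_cases c; simp [sporadic]
  · have : b ≤ 3 := by nlinarith
    interval_cases b
    have : c ≤ 3 := by nlinarith
    interval_cases c; simp [sporadic]

theorem quadruple_classification (ha : 2 ≤ a) (hb : 2 ≤ b) (hc : 2 ≤ c) (hd : 2 ≤ d)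
    (hχ : 2 ≤ 1 / (a : ℚ) + 1 / b + 1 / c + 1 / d) : a = 2 ∧ b = 2 ∧ c = 2 ∧ d = 2 := by
  have eq_two : ∀ x : ℤ, 2 ≤ x → 1 / 2 ≤ 1 / (x : ℚ) → x = 2 := fun x hx h =>
    le_antisymm (by exact_mod_cast le_of_one_div_le_one_div two_pos h) hx
  have := (one_div_mem_Ioc ha).2
  have := (one_div_mem_Ioc hb).2
  have := (one_div_mem_Ioc hc).2
  have := (one_div_mem_Ioc hd).2
  exact ⟨eq_two a ha (by linarith), eq_two b hb (by linarith), eq_two c hc (by linarith),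
    eq_two d hd (by linarith)⟩

theorem NonnegEulerChar.classification {S : Multiset ℤ} (hS : NonnegEulerChar S) :
    S = 0 ∨ (∃ m, 2 ≤ m ∧ S = {m}) ∨ (∃ a b, 2 ≤ a ∧ 2 ≤ b ∧ S = {a, b}) ∨
      (∃ m, 2 ≤ m ∧ S = {2, 2, m}) ∨ S ∈ sporadic := by
  have hcard := card_le_four hS
  obtain ⟨h2, hχ⟩ := hS
  have hsorted := Multiset.pairwise_sort S (· ≤ ·)
  rw [← Multiset.sort_eq S (· ≤ ·)] at h2 hχ hcard ⊢
  generalize S.sort (· ≤ ·) = l at *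
  simp only [Multiset.mem_coe, Multiset.coe_card, Multiset.map_coe, Multiset.sum_coe] at h2 hχ hcard
  rcases l with _ | ⟨a, _ | ⟨b, _ | ⟨c, _ | ⟨d, _ | ⟨e, l⟩⟩⟩⟩⟩
  · exact Or.inl rfl
  · exact Or.inr <| Or.inl ⟨a, h2 a (by simp), rfl⟩
  · exact Or.inr <| Or.inr <| Or.inl ⟨a, b, h2 a (by simp), h2 b (by simp), rfl⟩
  · simp only [List.pairwise_cons, List.mem_cons, List.not_mem_nil, forall_eq_or_imp] at hsorted
    simp only [List.map_cons, List.map_nil, List.sum_cons, List.sum_nil, add_zero] at hχ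
    have hc := h2 c (by simp)
    rcases triple_classification (h2 a (by simp)) hsorted.1.1 hsorted.2.1.1 (by linarith) with
      ⟨rfl, rfl⟩ | hspor
    · exact Or.inr <| Or.inr <| Or.inr <| Or.inl ⟨c, hc, rfl⟩
    · exact Or.inr <| Or.inr <| Or.inr <| Or.inr hspor
  · simp only [List.map_cons, List.map_nil, List.sum_cons, List.sum_nil, add_zero] at hχ
    obtain ⟨rfl, rfl, rfl, rfl⟩ := quadruple_classification (h2 a (by simp)) (h2 b (by simp))
      (h2 c (by simp)) (h2 d (by simp)) (by linarith)
    exact Or.inr <| Or.inr <| Or.inr <| Or.inr <| by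
      show ({2, 2, 2, 2} : Multiset ℤ) ∈ sporadic
      simp [sporadic]
  · simp at hcard
    omega

theorem coneTerm_add_intCast_inj {j k : ℤ} (hm : 2 ≤ m) (hn : 2 ≤ n)
    (h : coneTerm m + j = coneTerm n + k) : m = n ∧ j = k := by
  obtain ⟨hm0, hm1⟩ := one_div_mem_Ioc hm
  obtain ⟨hn0, hn1⟩ := one_div_mem_Ioc hn
  have hk : ((n - m + k - j : ℤ) : ℚ) = 1 / m - 1 / n := by
    unfold coneTerm at h; push_cast; linarith
  have hk0 := Int.eq_zero_of_cast_eq_sub_of_mem_Ioc ⟨hm0, by linarith⟩ ⟨hn0, by linarith⟩ hk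
  have hmn : m = n := by
    rw [hk0, Int.cast_zero, eq_comm, sub_eq_zero, one_div, one_div, inv_inj] at hk
    exact_mod_cast hk
  omega

theorem coneTerm_add_coneTerm_ne_coneTerm_add_intCast {k : ℤ} (ha : 2 ≤ a) (hb : 2 ≤ b)
    (hm : 2 ≤ m) (hk : k ≤ 1) : coneTerm a + coneTerm b ≠ coneTerm m + k := by
  intro h
  obtain ⟨ha0, ha1⟩ := one_div_mem_Ioc ha
  obtain ⟨hb0, hb1⟩ := one_div_mem_Ioc hb
  obtain ⟨hm0, hm1⟩ := one_div_mem_Ioc hm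
  have hk : ((m + k + 2 - a - b : ℤ) : ℚ) = (1 / a + 1 / b) - 1 / m := by
    unfold coneTerm at h; push_cast; linarith
  have hk0 := Int.eq_zero_of_cast_eq_sub_of_mem_Ioc ⟨by positivity, by linarith⟩
    ⟨hm0, by linarith⟩ hk
  rw [hk0, Int.cast_zero] at hk
  -- `1/a + 1/b = 1/m` forces `a, b > m`, too large for `a + b = m + k + 2`
  have := lt_of_one_div_lt ha (m := m) (by linarith)
  have := lt_of_one_div_lt hb (m := m) (by linarith)
  omega

theorem pair_eq_of_coneTerm_add_eq (ha : 2 ≤ a) (hb : 2 ≤ b) (hc : 2 ≤ c) (hd : 2 ≤ d)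
    (h : coneTerm a + coneTerm b = coneTerm c + coneTerm d) : ({a, b} : Multiset ℤ) = {c, d} := by
  obtain ⟨ha0, ha1⟩ := one_div_mem_Ioc ha
  obtain ⟨hb0, hb1⟩ := one_div_mem_Ioc hb
  obtain ⟨hc0, hc1⟩ := one_div_mem_Ioc hc
  obtain ⟨hd0, hd1⟩ := one_div_mem_Ioc hd
  have hk : ((c + d - a - b : ℤ) : ℚ) = (1 / a + 1 / b) - (1 / c + 1 / d) := by
    unfold coneTerm at h; push_cast; linarith
  have hk0 := Int.eq_zero_of_cast_eq_sub_of_mem_Ioc ⟨by positivity, by linarith⟩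
    ⟨by positivity, by linarith⟩ hk
  have hs : a + b = c + d := by omega
  rw [hk0, Int.cast_zero, eq_comm, sub_eq_zero] at hk
  have hsQ : (a + b : ℚ) = c + d := by exact_mod_cast hs
  have hp : (a * b : ℚ) = c * d := by
    have : (a : ℚ) ≠ 0 := by exact_mod_cast (by omega : a ≠ 0)
    have : (b : ℚ) ≠ 0 := by exact_mod_cast (by omega : b ≠ 0)
    have : (c : ℚ) ≠ 0 := by exact_mod_cast (by omega : c ≠ 0)
    have : (d : ℚ) ≠ 0 := by exact_mod_cast (by omega : d ≠ 0)
    have hcd : (c + d : ℚ) ≠ 0 := by exact_mod_cast (by omega : c + d ≠ 0)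
    field_simp at hk
    have : (c + d : ℚ) * (a * b - c * d) = 0 := by linear_combination -hk + c * d * hsQ
    exact sub_eq_zero.mp ((mul_eq_zero.mp this).resolve_left hcd)
  exact Multiset.pair_eq_pair_of_add_eq_of_mul_eq hs (by exact_mod_cast hp)

theorem map_coneSum_sporadic :
    sporadic.map coneSum = [19 / 6, 49 / 12, 151 / 30, 6, 5, 4, 2] := by
  norm_num [sporadic, coneSum, coneTerm]

theorem coneSum_injOn_sporadic {X Y : Multiset ℤ} (hX : X ∈ sporadic) (hY : Y ∈ sporadic)
    (h : coneSum X = coneSum Y) : X = Y :=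
  List.inj_on_of_nodup_map (by rw [map_coneSum_sporadic]; norm_num) hX hY h

theorem le_six_of_mem_map_coneSum_sporadic {v : ℚ} (hv : v ∈ sporadic.map coneSum) : v ≤ 6 := by
  rw [map_coneSum_sporadic] at hv
  simp only [List.mem_cons, List.not_mem_nil, or_false] at hv
  rcases hv with rfl | rfl | rfl | rfl | rfl | rfl | rfl <;> norm_num

theorem coneSum_ne_coneTerm_add_intCast_of_mem_sporadic {X : Multiset ℤ} {k : ℤ}
    (hX : X ∈ sporadic) (hm : 2 ≤ m) (hk₀ : 0 ≤ k) (hk₁ : k ≤ 1) : coneSum X ≠ coneTerm m + k := by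
  intro hXm
  have h := List.mem_map_of_mem (f := coneSum) hX
  rw [hXm] at h
  have : (0 : ℚ) ≤ k := by exact_mod_cast hk₀
  have : m < 8 := by
    exact_mod_cast (by linarith [sub_two_lt_coneTerm hm, le_six_of_mem_map_coneSum_sporadic h] :
      (m : ℚ) < 8)
  rw [map_coneSum_sporadic] at h
  interval_cases m <;> interval_cases k <;> norm_num [coneTerm] at h

theorem coneSum_ne_coneTerm_add_coneTerm_of_mem_sporadic {X : Multiset ℤ} (hX : X ∈ sporadic)
    (ha : 2 ≤ a) (hb : 2 ≤ b) : coneSum X ≠ coneTerm a + coneTerm b := by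
  intro hXab
  have h := List.mem_map_of_mem (f := coneSum) hX
  rw [hXab] at h
  have := le_six_of_mem_map_coneSum_sporadic h
  have : a < 8 := by
    exact_mod_cast (by linarith [sub_two_lt_coneTerm ha, half_le_coneTerm hb] : (a : ℚ) < 8)
  have : b < 8 := by
    exact_mod_cast (by linarith [sub_two_lt_coneTerm hb, half_le_coneTerm ha] : (b : ℚ) < 8)
  rw [map_coneSum_sporadic] at h
  interval_cases a <;> interval_cases b <;> norm_num [coneTerm] at h

theorem eq_zero_of_coneSum_eq_zero {S : Multiset ℤ} (hS : ∀ m ∈ S, 2 ≤ m) (h : coneSum S = 0) :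
    S = 0 := by
  have := Multiset.card_nsmul_le_sum (s := S.map coneTerm) (a := 1 / 2)
    (by simpa using fun m hm => half_le_coneTerm (hS m hm))
  rw [Multiset.card_map, nsmul_eq_mul] at this
  change _ ≤ coneSum S at this
  rw [← Multiset.card_eq_zero]
  exact_mod_cast (by linarith : (Multiset.card S : ℚ) ≤ 0).antisymm (Nat.cast_nonneg _)

variable {T : Multiset ℤ}

theorem eq_singleton_of_coneSum_eq (hm : 2 ≤ m) (hT : NonnegEulerChar T)
    (h : coneSum T = coneTerm m) : T = {m} := by
  rcases hT.classification with rfl | ⟨n, hn, rfl⟩ | ⟨a, b, ha, hb, rfl⟩ | ⟨n, hn, rfl⟩ | hspor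
  · linarith [half_le_coneTerm hm, coneSum_zero]
  · rw [(coneTerm_add_intCast_inj (j := 0) (k := 0) hn hm (by simpa using h)).1]
  · exact absurd (by simpa using h)
      (coneTerm_add_coneTerm_ne_coneTerm_add_intCast ha hb hm (k := 0) zero_le_one)
  · rw [coneSum_two_two] at h
    have := (coneTerm_add_intCast_inj (j := 1) (k := 0) hn hm (by simpa using h)).2
    omega
  · exact absurd (by simpa using h)
      (coneSum_ne_coneTerm_add_intCast_of_mem_sporadic (k := 0) hspor hm le_rfl zero_le_one)

theorem eq_pair_of_coneSum_eq (ha : 2 ≤ a) (hb : 2 ≤ b) (hT : NonnegEulerChar T)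
    (h : coneSum T = coneTerm a + coneTerm b) : T = {a, b} := by
  rcases hT.classification with rfl | ⟨n, hn, rfl⟩ | ⟨c, d, hc, hd, rfl⟩ | ⟨n, hn, rfl⟩ | hspor
  · linarith [half_le_coneTerm ha, half_le_coneTerm hb, coneSum_zero]
  · exact absurd (by simpa using h.symm)
      (coneTerm_add_coneTerm_ne_coneTerm_add_intCast ha hb hn (k := 0) zero_le_one)
  · exact pair_eq_of_coneTerm_add_eq hc hd ha hb (by simpa using h)
  · rw [coneSum_two_two] at h
    exact absurd (by simpa using h.symm)
      (coneTerm_add_coneTerm_ne_coneTerm_add_intCast ha hb hn (k := 1) le_rfl)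
  · exact absurd h (coneSum_ne_coneTerm_add_coneTerm_of_mem_sporadic hspor ha hb)

theorem eq_two_two_of_coneSum_eq (hm : 2 ≤ m) (hT : NonnegEulerChar T)
    (h : coneSum T = coneTerm m + 1) : T = {2, 2, m} := by
  rcases hT.classification with rfl | ⟨n, hn, rfl⟩ | ⟨a, b, ha, hb, rfl⟩ | ⟨n, hn, rfl⟩ | hspor
  · linarith [half_le_coneTerm hm, coneSum_zero]
  · have := (coneTerm_add_intCast_inj (j := 0) (k := 1) hn hm (by simpa using h)).2
    omega
  · exact absurd (by simpa using h)
      (coneTerm_add_coneTerm_ne_coneTerm_add_intCast ha hb hm (k := 1) le_rfl)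
  · rw [coneSum_two_two] at h
    rw [(coneTerm_add_intCast_inj (j := 1) (k := 1) hn hm (by simpa using h)).1]
  · exact absurd (by simpa using h)
      (coneSum_ne_coneTerm_add_intCast_of_mem_sporadic (k := 1) hspor hm zero_le_one le_rfl)

theorem eq_of_coneSum_eq_of_mem_sporadic {X : Multiset ℤ} (hX : X ∈ sporadic)
    (hT : NonnegEulerChar T) (h : coneSum T = coneSum X) : T = X := by
  rcases hT.classification with rfl | ⟨n, hn, rfl⟩ | ⟨a, b, ha, hb, rfl⟩ | ⟨n, hn, rfl⟩ | hspor
  · have hX' := List.mem_map_of_mem (f := coneSum) hX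
    rw [← h, coneSum_zero, map_coneSum_sporadic] at hX'
    norm_num at hX'
  · exact absurd (by simpa using h.symm)
      (coneSum_ne_coneTerm_add_intCast_of_mem_sporadic (k := 0) hX hn le_rfl zero_le_one)
  · exact absurd (by simpa using h.symm)
      (coneSum_ne_coneTerm_add_coneTerm_of_mem_sporadic hX ha hb)
  · rw [coneSum_two_two] at h
    exact absurd (by simpa using h.symm)
      (coneSum_ne_coneTerm_add_intCast_of_mem_sporadic (k := 1) hX hn zero_le_one le_rfl)
  · exact coneSum_injOn_sporadic hspor hX h

end

end ConeOrders

open ConeOrders in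
/-- Arithmetic core of Theorem 5.10: if `S` and `T` are finite multisets of
integers `≥ 2` with `∑_{m∈S}(1 - 1/m) ≤ 2` and `∑_{m∈T}(1 - 1/m) ≤ 2` (i.e.
both corresponding orbifolds have nonnegative Euler characteristic), and
`∑_{m∈S}(m + 1/m - 2) = ∑_{m∈T}(m + 1/m - 2)`, then `S = T`. -/
theorem multiset_cone_orders_determined (S T : Multiset ℤ)
    (hS : ∀ m ∈ S, (2 : ℤ) ≤ m) (hT : ∀ m ∈ T, (2 : ℤ) ≤ m)
    (hSχ : (S.map (fun m => 1 - 1 / (m : ℚ))).sum ≤ 2)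
    (hTχ : (T.map (fun m => 1 - 1 / (m : ℚ))).sum ≤ 2)
    (h : (S.map (fun m => (m : ℚ) + 1 / m - 2)).sum
        = (T.map (fun m => (m : ℚ) + 1 / m - 2)).sum) :
    S = T := by
  -- the maps in the statement run over `S` and `T` coerced to `Multiset ℚ` by a monadic bind
  simp only [Multiset.pure_def, Multiset.bind_def, Multiset.bind_singleton, Multiset.map_map,
    Function.comp_def] at hSχ hTχ h
  have hT' : NonnegEulerChar T := ⟨hT, hTχ⟩
  have hc : coneSum T = coneSum S := h.symm
  rcases NonnegEulerChar.classification ⟨hS, hSχ⟩ with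
    rfl | ⟨m, hm, rfl⟩ | ⟨a, b, ha, hb, rfl⟩ | ⟨m, hm, rfl⟩ | hspor
  · exact (eq_zero_of_coneSum_eq_zero hT (by simpa using hc)).symm
  · exact (eq_singleton_of_coneSum_eq hm hT' (by simpa using hc)).symm
  · exact (eq_pair_of_coneSum_eq ha hb hT' (by simpa using hc)).symm
  · exact (eq_two_two_of_coneSum_eq hm hT' (by rwa [← coneSum_two_two])).symm
  · exact (eq_of_coneSum_eq_of_mem_sporadic hspor hT' hc).symm
end

section
/- For all integers m, p, q, r ≥ 2 with 1/p + 1/q + 1/r < 1, one has 3 + m + 1/m ≠ -2 + p + q + r + 1/p + 1/q + 1/r in ℚ. -/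
/-- The pillow `O(2,2,m)` cannot share the invariant `c` with a hyperbolic
triangular pillow: for integers `m, p, q, r ≥ 2` with `1/p + 1/q + 1/r < 1`,
`3 + m + 1/m ≠ -2 + p + q + r + 1/p + 1/q + 1/r` in `ℚ`. -/
theorem pillow22m_ne_hyperbolic_pillow (m p q r : ℕ)
    (hm : 2 ≤ m) (hp : 2 ≤ p) (hq : 2 ≤ q) (hr : 2 ≤ r)
    (hχ : 1 / (p : ℚ) + 1 / q + 1 / r < 1) :
    3 + (m : ℚ) + 1 / m ≠ -2 + (p : ℚ) + q + r + 1 / p + 1 / q + 1 / r := by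
  intro h
  have hm' : (2:ℚ) ≤ m := by exact_mod_cast hm
  have hp' : (2:ℚ) ≤ p := by exact_mod_cast hp
  have hq' : (2:ℚ) ≤ q := by exact_mod_cast hq
  have hr' : (2:ℚ) ≤ r := by exact_mod_cast hr
  have hm0 : (0:ℚ) < m := by linarith
  have hp0 : (0:ℚ) < p := by linarith
  have hq0 : (0:ℚ) < q := by linarith
  have hr0 : (0:ℚ) < r := by linarith
  have hminv1 : (0:ℚ) < 1 / m := by positivity
  have hminv2 : (1:ℚ) / m ≤ 1 / 2 := one_div_le_one_div_of_le (by norm_num) hm'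
  have hs0 : (0:ℚ) < 1 / p + 1 / q + 1 / r := by positivity
  -- the integer d = p+q+r-5-m equals 1/m - (1/p+1/q+1/r), which lies in (-1,1)
  set z : ℤ := (p : ℤ) + q + r - 5 - m with hz
  have hzq : ((z : ℚ)) = (p:ℚ) + q + r - 5 - m := by push_cast [hz]; ring
  have hzval : ((z : ℚ)) = 1 / m - (1 / p + 1 / q + 1 / r) := by
    rw [hzq]; linarith
  have hz0 : z = 0 := by
    have h1 : ((z : ℚ)) < 1 := by rw [hzval]; linarith [hminv2]
    have h2 : (-1 : ℚ) < z := by rw [hzval]; linarith [hminv1]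
    have h1' : z < 1 := by exact_mod_cast h1
    have h2' : (-1 : ℤ) < z := by exact_mod_cast h2
    omega
  have hsum : (m : ℚ) = (p:ℚ) + q + r - 5 := by
    have := hzq
    rw [hz0] at this
    push_cast at this
    linarith
  have hinv : 1 / (m : ℚ) = 1 / p + 1 / q + 1 / r := by
    have := hzval
    rw [hz0] at this
    push_cast at this
    linarith
  -- clear denominators
  field_simp at hinv
  rw [hsum] at hinv
  have hp2 : (0:ℚ) ≤ p - 2 := by linarith
  have hq2 : (0:ℚ) ≤ q - 2 := by linarith
  have hr2 : (0:ℚ) ≤ r - 2 := by linarith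
  nlinarith [mul_nonneg (mul_nonneg hp2 hp0.le) hq0.le,
    mul_nonneg (mul_nonneg hp2 hp0.le) hr0.le,
    mul_nonneg (mul_nonneg hq2 hq0.le) hp0.le,
    mul_nonneg (mul_nonneg hq2 hq0.le) hr0.le,
    mul_nonneg (mul_nonneg hr2 hr0.le) hp0.le,
    mul_nonneg (mul_nonneg hr2 hr0.le) hq0.le,
    mul_nonneg (mul_nonneg hp2 hq0.le) hr0.le,
    mul_nonneg (mul_nonneg hq2 hp0.le) hr0.le,
    mul_nonneg (mul_nonneg hr2 hp0.le) hq0.le,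
    mul_pos hp0 hq0, mul_pos hq0 hr0, mul_pos hp0 hr0]
end

section
/- For all integers m, p, q, r ≥ 2 with 1/p + 1/q + 1/r < 1, one has 2 + m + 1/m ≠ -2 + p + q + r + 1/p + 1/q + 1/r in ℚ. -/
/-- The invariant `c` distinguishes teardrops from hyperbolic triangular
pillows: for integers `m, p, q, r ≥ 2` with `1/p + 1/q + 1/r < 1`,
`2 + m + 1/m ≠ -2 + p + q + r + 1/p + 1/q + 1/r` in `ℚ`. -/
theorem teardrop_ne_hyperbolic_pillow (m p q r : ℕ)
    (hm : 2 ≤ m) (hp : 2 ≤ p) (hq : 2 ≤ q) (hr : 2 ≤ r)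
    (hχ : 1 / (p : ℚ) + 1 / q + 1 / r < 1) :
    2 + (m : ℚ) + 1 / m ≠ -2 + (p : ℚ) + q + r + 1 / p + 1 / q + 1 / r := by
  intro h
  have hmq : (2:ℚ) ≤ m := by exact_mod_cast hm
  have hpq : (2:ℚ) ≤ p := by exact_mod_cast hp
  have hqq : (2:ℚ) ≤ q := by exact_mod_cast hq
  have hrq : (2:ℚ) ≤ r := by exact_mod_cast hr
  have hmpos : (0:ℚ) < m := by linarith
  have hppos : (0:ℚ) < p := by linarith
  have hqpos : (0:ℚ) < q := by linarith
  have hrpos : (0:ℚ) < r := by linarith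
  have h1m : 0 < 1 / (m:ℚ) := by positivity
  have h1m' : 1 / (m:ℚ) < 1 := by
    rw [div_lt_one hmpos]; linarith
  have h1p : 0 < 1 / (p:ℚ) := by positivity
  have h1q : 0 < 1 / (q:ℚ) := by positivity
  have h1r : 0 < 1 / (r:ℚ) := by positivity
  -- the integer difference
  set n : ℤ := (m : ℤ) + 4 - p - q - r with hn
  have hcast : ((n : ℤ) : ℚ) = (1 / p + 1 / q + 1 / r) - 1 / m := by
    push_cast [hn]; linarith
  have hn0 : n = 0 := by
    have h1 : ((n : ℤ) : ℚ) < 1 := by rw [hcast]; linarith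
    have h2 : (-1 : ℚ) < ((n : ℤ) : ℚ) := by rw [hcast]; linarith
    have h1' : n < 1 := by exact_mod_cast h1
    have h2' : (-1 : ℤ) < n := by exact_mod_cast h2
    omega
  have hfrac : 1 / (m:ℚ) = 1 / p + 1 / q + 1 / r := by
    rw [hn0] at hcast; push_cast at hcast; linarith
  have hmsum : (m : ℚ) = p + q + r - 4 := by
    have : ((n : ℤ) : ℚ) = 0 := by rw [hn0]; norm_num
    push_cast [hn] at this; linarith
  have hpm : (p : ℚ) ≤ m := by rw [hmsum]; linarith
  have : 1 / (m:ℚ) ≤ 1 / p := one_div_le_one_div_of_le hppos hpm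
  linarith
end
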